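/- arXiv:0810.2781 — 2 statements merged into one kernel-verified Lean document; each statement's English description precedes it below -/
import Mathlib

section
/- Suppose every column of H has weight at most 2 within the full set of rows and the rows of H are linearly independent over GF(2). Then the set of all rows of H admits a triangular enumeration. (Corollary 2: a regular LDPC code with column weight 2, i.e., a cycle code, can be encoded by the label-and-decide algorithm.) -/
/-!
Over GF(2), linear independence makes the sum of the rows in any nonempty set `S` nonzero, so
some column meets `S` an odd number of times; as the column has weight at most 2, it meets `S`
exactly once, i.e. some row of `S` has a private column. Removing that row, enumerating the
remaining rows recursively and putting the removed row last gives a triangular enumeration.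
-/

/-- A triangular enumeration of a finite set `R` of rows of `H`. -/
def TriangularEnum {M N : Type*} [DecidableEq M] (H : Matrix M N (ZMod 2))
    (R : Finset M) : Prop :=
  ∃ (e : Fin R.card → M) (c : Fin R.card → N),
    Function.Injective e ∧ (∀ k, e k ∈ R) ∧
    Function.Injective c ∧
    (∀ k, H (e k) (c k) = 1) ∧
    (∀ k l, k < l → H (e k) (c l) = 0)

open Finset

theorem sum_zmod_two_eq_card_filter {ι : Type*} (s : Finset ι) (f : ι → ZMod 2) :
    ∑ i ∈ s, f i = #(s.filter (f · = 1)) := by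
  have hbool : ∀ x : ZMod 2, x = if x = 1 then 1 else 0 := by decide
  rw [← sum_boole]
  exact sum_congr rfl fun i _ => hbool (f i)

namespace TriangularEnum

variable {M N : Type*} [DecidableEq M] {H : Matrix M N (ZMod 2)}

theorem of_card_eq {R : Finset M} {n : ℕ} (hn : #R = n) (e : Fin n → M) (c : Fin n → N)
    (he : Function.Injective e) (heR : ∀ k, e k ∈ R) (hc : Function.Injective c)
    (hdiag : ∀ k, H (e k) (c k) = 1) (hupper : ∀ k l, k < l → H (e k) (c l) = 0) :
    TriangularEnum H R := by
  subst hn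
  exact ⟨e, c, he, heR, hc, hdiag, hupper⟩

theorem empty : TriangularEnum H ∅ :=
  ⟨Fin.elim0, Fin.elim0, fun k => k.elim0, fun k => k.elim0, fun k => k.elim0,
    fun k => k.elim0, fun k => k.elim0⟩

theorem insert {S : Finset M} {i : M} {j : N} (hS : TriangularEnum H S) (hi : i ∉ S)
    (hij : H i j = 1) (hj : ∀ i' ∈ S, H i' j = 0) : TriangularEnum H (insert i S) := by
  obtain ⟨e, c, he, heS, hc, hdiag, hupper⟩ := hS
  have hcj : j ∉ Set.range c := by
    rintro ⟨k, rfl⟩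
    simpa [hj _ (heS k)] using hdiag k
  refine of_card_eq (card_insert_of_notMem hi) (Fin.snoc e i) (Fin.snoc c j)
    (Fin.snoc_injective_of_injective he fun ⟨k, hk⟩ => hi (hk ▸ heS k)) ?_
    (Fin.snoc_injective_of_injective hc hcj) ?_ ?_
  · intro k
    induction k using Fin.lastCases <;> simp [heS]
  · intro k
    induction k using Fin.lastCases <;> simp [hdiag, hij]
  · intro k l hkl
    induction l using Fin.lastCases with
    | last =>
      obtain ⟨k, rfl⟩ := Fin.exists_castSucc_eq.mpr (Fin.ne_last_of_lt hkl)
      simpa using hj _ (heS k)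
    | cast l =>
      obtain ⟨k, rfl⟩ :=
        Fin.exists_castSucc_eq.mpr (Fin.ne_last_of_lt (hkl.trans (Fin.castSucc_lt_last l)))
      simpa using hupper k l (by simpa using hkl)

theorem of_forall_exists_private_column {R : Finset M}
    (h : ∀ S ⊆ R, S.Nonempty → ∃ i ∈ S, ∃ j, H i j = 1 ∧ ∀ i' ∈ S, i' ≠ i → H i' j = 0) :
    TriangularEnum H R := by
  induction R using Finset.strongInduction with
  | H R ih =>
    rcases R.eq_empty_or_nonempty with rfl | hne
    · exact empty
    obtain ⟨i, hiR, j, hij, hj⟩ := h R subset_rfl hne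
    rw [← insert_erase hiR]
    refine insert (ih _ (erase_ssubset hiR) fun S hS => h S (hS.trans (erase_subset i R)))
      (notMem_erase i R) hij fun i' hi' => hj i' (mem_of_mem_erase hi') (ne_of_mem_erase hi')

end TriangularEnum

theorem exists_private_column {M N : Type*} [Fintype M] (H : Matrix M N (ZMod 2))
    (hdeg : ∀ j, #(univ.filter (fun i => H i j = 1)) ≤ 2)
    (hind : LinearIndependent (ZMod 2) (fun i : M => H i)) {S : Finset M} (hS : S.Nonempty) :
    ∃ i ∈ S, ∃ j, H i j = 1 ∧ ∀ i' ∈ S, i' ≠ i → H i' j = 0 := by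
  have hsum : ∑ i ∈ S, H i ≠ 0 := fun h0 => by
    obtain ⟨i, hi⟩ := hS
    exact one_ne_zero (linearIndependent_iff'.mp hind S (fun _ => 1) (by simpa using h0) i hi)
  obtain ⟨j, hj⟩ : ∃ j, ∑ i ∈ S, H i j ≠ 0 := by
    by_contra! h
    exact hsum (funext fun j => (Finset.sum_apply (M := fun _ : N => ZMod 2) j S H).trans (h j))
  have hodd : Odd #(S.filter (H · j = 1)) := by
    rw [sum_zmod_two_eq_card_filter, Ne, ZMod.natCast_eq_zero_iff_even] at hj
    exact Nat.not_even_iff_odd.mp hj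
  have hle : #(S.filter (H · j = 1)) ≤ 2 :=
    (card_le_card (filter_subset_filter _ (subset_univ S))).trans (hdeg j)
  have hone : #(S.filter (H · j = 1)) = 1 := by obtain ⟨k, hk⟩ := hodd; omega
  obtain ⟨i, hi⟩ := card_eq_one.mp hone
  have hiS : i ∈ S.filter (H · j = 1) := hi ▸ mem_singleton_self i
  refine ⟨i, (mem_filter.mp hiS).1, j, (mem_filter.mp hiS).2, fun i' hi' hne => ?_⟩
  have hzero : ∀ x : ZMod 2, x ≠ 1 → x = 0 := by decide
  refine hzero _ fun h1 => hne ?_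
  simpa [hi] using (mem_filter.mpr ⟨hi', h1⟩ : i' ∈ S.filter (H · j = 1))

theorem cycleCode_triangularEnum_general {M N : Type*} [Fintype M] [DecidableEq M]
    (H : Matrix M N (ZMod 2))
    (hdeg : ∀ j, (Finset.univ.filter (fun i => H i j = 1)).card ≤ 2)
    (hind : LinearIndependent (ZMod 2) (fun i : M => H i)) :
    TriangularEnum H Finset.univ :=
  TriangularEnum.of_forall_exists_private_column fun _ _ hS => exists_private_column H hdeg hind hS

theorem cycleCode_triangularEnum {M N : Type*} [Fintype M] [DecidableEq M] [Fintype N]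
    (H : Matrix M N (ZMod 2))
    (hdeg : ∀ j, (Finset.univ.filter (fun i => H i j = 1)).card ≤ 2)
    (hind : LinearIndependent (ZMod 2) (fun i : M => H i)) :
    TriangularEnum H Finset.univ :=
  cycleCode_triangularEnum_general H hdeg hind
end

section
/- Suppose there exist an enumeration r_1, …, r_m of all rows of H and pairwise distinct columns c_1, …, c_m such that H (r_i) (c_i) = 1 for every i and H (r_i) (c_j) = 0 whenever j < i (i.e., after row and column permutations H is upper triangular with ones on the diagonal). Then for every nonempty set R of rows of H there exists a column whose weight within R is exactly 1; in particular H contains no encoding stopping set. (Corollary 3: if the parity check matrix can be transformed into an upper triangular matrix by row and column permutations, then the code can be encoded by the label-and-decide algorithm.) -/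
/-! In the triangular order, the first row `r i` of `R` is the only row of `R` that meets the
diagonal column `c i`: every later row vanishes there. So `c i` has weight one within `R`, which
an encoding stopping set forbids. -/

/-- An encoding stopping set of `H`. -/
def IsEncodingStoppingSet {M N : Type*} [DecidableEq M] (H : Matrix M N (ZMod 2))
    (R : Finset M) : Prop :=
  R.Nonempty ∧
  LinearIndependent (ZMod 2) (fun i : R => H i) ∧
  ∀ j, (∃ i ∈ R, H i j = 1) → 2 ≤ (R.filter (fun i => H i j = 1)).card

section Triangular

variable {ι M N α : Type*} [LinearOrder ι] [DecidableEq α] [Zero α] [One α] [NeZero (1 : α)]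

theorem Matrix.filter_eq_one_eq_singleton_of_isLeast (H : Matrix M N α) (r : ι → M) (c : ι → N)
    (hdiag : ∀ i, H (r i) (c i) = 1) (htri : ∀ i j, j < i → H (r i) (c j) = 0)
    {R : Finset M} (hRr : ↑R ⊆ Set.range r) {i : ι} (hi : IsLeast {k | r k ∈ R} i) :
    R.filter (fun a => H a (c i) = 1) = {r i} := by
  ext a
  simp only [Finset.mem_filter, Finset.mem_singleton]
  constructor
  · rintro ⟨haR, ha⟩
    obtain ⟨k, rfl⟩ := hRr haR
    rcases (hi.2 haR).lt_or_eq with hik | rfl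
    · exact absurd ((htri k i hik).symm.trans ha) zero_ne_one
    · rfl
  · rintro rfl
    exact ⟨hi.1, hdiag i⟩

theorem Matrix.exists_card_filter_eq_one_of_triangular [WellFoundedLT ι] (H : Matrix M N α)
    (r : ι → M) (c : ι → N) (hdiag : ∀ i, H (r i) (c i) = 1)
    (htri : ∀ i j, j < i → H (r i) (c j) = 0) {R : Finset M} (hR : R.Nonempty)
    (hRr : ↑R ⊆ Set.range r) : ∃ j, (R.filter (fun a => H a j = 1)).card = 1 := by
  have hne : {k | r k ∈ R}.Nonempty := by
    obtain ⟨a, ha⟩ := hR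
    obtain ⟨k, rfl⟩ := hRr ha
    exact ⟨k, ha⟩
  obtain ⟨i, hi⟩ : ∃ i, IsLeast {k | r k ∈ R} i :=
    ⟨_, wellFounded_lt.min_mem _ hne, fun _ hk => wellFounded_lt.min_le hk⟩
  refine ⟨c i, ?_⟩
  rw [H.filter_eq_one_eq_singleton_of_isLeast r c hdiag htri hRr hi, Finset.card_singleton]

end Triangular

theorem IsEncodingStoppingSet.card_filter_ne_one {M N : Type*} [DecidableEq M]
    {H : Matrix M N (ZMod 2)} {R : Finset M} (hR : IsEncodingStoppingSet H R) (j : N) :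
    (R.filter (fun i => H i j = 1)).card ≠ 1 := by
  intro hj
  obtain ⟨i, hi⟩ := Finset.card_pos.mp (hj ▸ Nat.one_pos)
  have := hR.2.2 j ⟨i, Finset.mem_filter.mp hi⟩
  omega

theorem upperTriangular_no_encodingStoppingSet_general {M N : Type*} [DecidableEq M]
    (H : Matrix M N (ZMod 2)) (m : ℕ)
    (r : Fin m → M) (c : Fin m → N)
    (hr : Function.Bijective r)
    (hdiag : ∀ i, H (r i) (c i) = 1)
    (htri : ∀ i j : Fin m, j < i → H (r i) (c j) = 0) :
    (∀ R : Finset M, R.Nonempty →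
      ∃ j, (R.filter (fun i => H i j = 1)).card = 1) ∧
    ¬ ∃ R : Finset M, IsEncodingStoppingSet H R := by
  have weight_one : ∀ R : Finset M, R.Nonempty →
      ∃ j, (R.filter (fun i => H i j = 1)).card = 1 := fun R hR =>
    H.exists_card_filter_eq_one_of_triangular r c hdiag htri hR (by simp [hr.2.range_eq])
  refine ⟨weight_one, ?_⟩
  rintro ⟨R, hR⟩
  obtain ⟨j, hj⟩ := weight_one R hR.1
  exact hR.card_filter_ne_one j hj

theorem upperTriangular_no_encodingStoppingSet {M N : Type*} [Fintype M] [DecidableEq M]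
    [Fintype N] (H : Matrix M N (ZMod 2)) (m : ℕ)
    (r : Fin m → M) (c : Fin m → N)
    (hr : Function.Bijective r) (hc : Function.Injective c)
    (hdiag : ∀ i, H (r i) (c i) = 1)
    (htri : ∀ i j : Fin m, j < i → H (r i) (c j) = 0) :
    (∀ R : Finset M, R.Nonempty →
      ∃ j, (R.filter (fun i => H i j = 1)).card = 1) ∧
    ¬ ∃ R : Finset M, IsEncodingStoppingSet H R :=
  upperTriangular_no_encodingStoppingSet_general H m r c hr hdiag htri
end
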